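/- arXiv:2403.07784 — 2 statements merged into one kernel-verified Lean document; each statement's English description precedes it below -/
import Mathlib

section
/- Let n, N be natural numbers and suppose x_1,...,x_N ∈ ℝ^n, h_1,...,h_N ∈ ℝ, D_1,...,D_N ∈ ℝ^n satisfy h_j > h_i + D_i · (x_j - x_i) for all i ≠ j. Then for sufficiently small ε > 0, the function η_0(x) := max_{1 ≤ i ≤ N} (h_i + D_i · (x - x_i) + ε|x - x_i|²) satisfies η_0(x_j) = h_j for every j. -/
open RealInnerProductSpace

theorem stmt1 (n N : ℕ) (x : Fin N → EuclideanSpace ℝ (Fin n))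
    (h : Fin N → ℝ) (D : Fin N → EuclideanSpace ℝ (Fin n))
    (hyp : ∀ i j : Fin N, i ≠ j → h i + ⟪D i, x j - x i⟫ < h j) :
    ∃ ε₀ > (0 : ℝ), ∀ ε : ℝ, 0 < ε → ε ≤ ε₀ →
      ∀ j, (⨆ i : Fin N, (h i + ⟪D i, x j - x i⟫ + ε * ‖x j - x i‖ ^ 2)) = h j := by
  rcases Nat.eq_zero_or_pos N with hN | hN
  · subst hN
    exact ⟨1, one_pos, fun ε _ _ j => j.elim0⟩
  haveI : Nonempty (Fin N) := ⟨⟨0, hN⟩⟩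
  set f : Fin N × Fin N → ℝ := fun p =>
    if p.1 = p.2 then 1
    else (h p.2 - h p.1 - ⟪D p.1, x p.2 - x p.1⟫) / (‖x p.2 - x p.1‖ ^ 2 + 1) with hf
  refine ⟨Finset.univ.inf' Finset.univ_nonempty f, ?_, ?_⟩
  · rw [gt_iff_lt, Finset.lt_inf'_iff]
    intro p _
    rw [hf]
    dsimp only
    split_ifs with hpq
    · exact one_pos
    · apply div_pos
      · have := hyp p.1 p.2 hpq
        linarith
      · positivity
  · intro ε hε hεle j
    apply le_antisymm
    · apply ciSup_le
      intro i
      rcases eq_or_ne i j with rfl | hij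
      · simp
      · have hle : Finset.univ.inf' Finset.univ_nonempty f ≤ f (i, j) :=
          Finset.inf'_le f (Finset.mem_univ _)
        have hfij : f (i, j) = (h j - h i - ⟪D i, x j - x i⟫) / (‖x j - x i‖ ^ 2 + 1) := by
          rw [hf]; simp [hij]
        set g := h j - h i - ⟪D i, x j - x i⟫ with hg
        set d := ‖x j - x i‖ ^ 2 with hd
        have hgpos : 0 < g := by have := hyp i j hij; linarith
        have hdpos : 0 ≤ d := by positivity
        have h1 : ε ≤ g / (d + 1) := by rw [hfij] at hle; linarith
        have h2 : ε * d ≤ g / (d + 1) * d := mul_le_mul_of_nonneg_right h1 hdpos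
        have h3 : g / (d + 1) * d ≤ g := by
          rw [div_mul_eq_mul_div, div_le_iff₀ (by linarith)]
          nlinarith
        linarith
    · have hb : BddAbove (Set.range fun i : Fin N =>
          h i + ⟪D i, x j - x i⟫ + ε * ‖x j - x i‖ ^ 2) :=
        Set.Finite.bddAbove (Set.finite_range _)
      have := le_ciSup hb j
      simpa using this
end

section
/- Let (X_1, ..., X_N) be an N-tuple of matrices in ℝ^{2×2} in T_N configuration, with A_{ij} = det(X_i - X_j). Then there exist λ_1, ..., λ_N > 0 and μ > 1 such that A^μ λ = 0, where A^μ is the N×N matrix with (A^μ)_{ij} = A_{ij} for i < j, (A^μ)_{ij} = μ A_{ij} for i > j, and zero diagonal. -/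
/-- An ordered `N`-tuple of `2×2` real matrices is a `T_N` configuration. -/
def IsTNConfig (N : ℕ) (X : Fin N → Matrix (Fin 2) (Fin 2) ℝ) : Prop :=
  (∀ i j, i ≠ j → 1 < (X i - X j).rank) ∧
  ∃ (P : Matrix (Fin 2) (Fin 2) ℝ) (C : Fin N → Matrix (Fin 2) (Fin 2) ℝ) (κ : Fin N → ℝ),
    (∀ i, (C i).rank = 1) ∧ (∑ i, C i = 0) ∧ (∀ i, 1 < κ i) ∧
    ∀ i, X i = P + (∑ j ∈ Finset.univ.filter fun j : Fin N => (j : ℕ) < (i : ℕ), C j) + κ i • C i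

/-!
Write `Q m = P + ∑_{k<m} C k` for the corners of the configuration (so `Q 0 = Q N = P`) and
`π m = ∏_{k<m} κ k / (κ k - 1)`. Since `det` is affine along the rank-one direction `C j`, the
weights `λ j = π j / (κ j - 1)` satisfy `λ j * det (Y - X j) = h (j + 1) - h j` with
`h m = π m * det (Y - Q m)`. For `Y = X i` the function `h` vanishes at `i` and `i + 1`, because
`X i - Q i` and `X i - Q (i + 1)` are multiples of `C i`; telescoping the sums over `j > i` and
`j < i` then leaves `h N - μ * h 0`, which is zero for `μ = π N > 1`.
-/

open Finset

theorem Matrix.det_eq_zero_of_rank_lt {n K : Type*} [Fintype n] [DecidableEq n] [Field K]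
    {A : Matrix n n K} (h : A.rank < Fintype.card n) : A.det = 0 := by
  by_contra hA
  exact h.ne (A.rank_of_isUnit ((A.isUnit_iff_isUnit_det).2 (isUnit_iff_ne_zero.2 hA)))

theorem Matrix.det_fin_two_sub_smul {R : Type*} [CommRing R] (M C : Matrix (Fin 2) (Fin 2) R)
    (hC : C.det = 0) (t : R) : (M - t • C).det = (1 - t) * M.det + t * (M - C).det := by
  simp only [Matrix.det_fin_two, Matrix.sub_apply, Matrix.smul_apply, smul_eq_mul] at hC ⊢
  linear_combination (t ^ 2 - t) * hC

section Below

variable {M : Type*} [CommMonoid M] {N : ℕ}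

@[to_additive]
def prodBelow (f : Fin N → M) (m : ℕ) : M :=
  ∏ k ∈ univ.filter fun k : Fin N => (k : ℕ) < m, f k

@[to_additive]
theorem prodBelow_zero (f : Fin N → M) : prodBelow f 0 = 1 := by
  simp [prodBelow]

@[to_additive]
theorem prodBelow_self (f : Fin N → M) : prodBelow f N = ∏ k, f k := by
  simp [prodBelow]

@[to_additive]
theorem prodBelow_succ (f : Fin N → M) (j : Fin N) :
    prodBelow f (j + 1) = prodBelow f j * f j := by
  have : (univ.filter fun k : Fin N => (k : ℕ) < j + 1) =
      insert j (univ.filter fun k : Fin N => (k : ℕ) < j) := by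
    ext k
    simp only [mem_filter, mem_univ, true_and, mem_insert, Fin.ext_iff]
    omega
  rw [prodBelow, prodBelow, this, prod_insert (by simp), mul_comm]

end Below

theorem Fin.sum_ite_sub_eq_zero {R : Type*} [CommRing R] {N : ℕ} (h : ℕ → R) (μ : R)
    (i : Fin N) (hi : μ * h i = h (i + 1)) (hN : h N = μ * h 0) :
    ∑ j : Fin N, (if (i : ℕ) < j then h (j + 1) - h j
      else if (j : ℕ) < i then μ * (h (j + 1) - h j) else 0) = 0 := by
  rw [Fin.sum_univ_eq_sum_range (fun j => if (i : ℕ) < j then h (j + 1) - h j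
      else if j < i then μ * (h (j + 1) - h j) else 0) N,
    ← sum_range_add_sum_Ico _ i.isLt, sum_range_succ]
  have below : ∑ j ∈ range i, (if (i : ℕ) < j then h (j + 1) - h j
      else if j < i then μ * (h (j + 1) - h j) else 0) = μ * (h i - h 0) := by
    rw [← sum_range_sub, mul_sum]
    refine sum_congr rfl fun j hj => ?_
    have hj : j < i := mem_range.1 hj
    rw [if_neg hj.not_gt, if_pos hj]
  have above : ∑ j ∈ Ico (i + 1 : ℕ) N, (if (i : ℕ) < j then h (j + 1) - h j
      else if j < i then μ * (h (j + 1) - h j) else 0) = h N - h (i + 1) := by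
    rw [← sum_Ico_sub h i.isLt]
    exact sum_congr rfl fun j hj => if_pos (mem_Ico.1 hj).1
  rw [below, above, if_neg (lt_irrefl _), if_neg (lt_irrefl _)]
  linear_combination hi + hN

theorem prodBelow_div_mul_det_sub_eq {K : Type*} [Field K] {N : ℕ}
    (P Y : Matrix (Fin 2) (Fin 2) K)
    (C : Fin N → Matrix (Fin 2) (Fin 2) K) (κ : Fin N → K) (j : Fin N) (hC : (C j).det = 0)
    (hκ : κ j ≠ 1) :
    prodBelow (fun k => κ k / (κ k - 1)) j / (κ j - 1) *
        (Y - (P + sumBelow C j + κ j • C j)).det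
      = prodBelow (fun k => κ k / (κ k - 1)) (j + 1) * (Y - (P + sumBelow C (j + 1))).det
        - prodBelow (fun k => κ k / (κ k - 1)) j * (Y - (P + sumBelow C j)).det := by
  have hκ' : κ j - 1 ≠ 0 := sub_ne_zero.2 hκ
  rw [prodBelow_succ, sumBelow_succ, ← sub_sub, Matrix.det_fin_two_sub_smul _ _ hC,
    ← add_assoc, ← sub_sub _ (P + sumBelow C j)]
  field_simp
  ring

theorem stmt13 (N : ℕ) (X : Fin N → Matrix (Fin 2) (Fin 2) ℝ) (hX : IsTNConfig N X) :
    ∃ μ : ℝ, 1 < μ ∧ ∃ lam : Fin N → ℝ, (∀ i, 0 < lam i) ∧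
      ∀ i : Fin N, ∑ j : Fin N, (if (i : ℕ) < (j : ℕ) then (X i - X j).det
        else if (j : ℕ) < (i : ℕ) then μ * (X i - X j).det else 0) * lam j = 0 := by
  obtain ⟨-, P, C, κ, hC, hCsum, hκ, hXeq⟩ := hX
  rcases isEmpty_or_nonempty (Fin N) with _ | _
  · exact ⟨2, one_lt_two, fun _ => 1, fun _ => one_pos, isEmptyElim⟩
  have hdetC (k : Fin N) : (C k).det = 0 :=
    Matrix.det_eq_zero_of_rank_lt (by simp [hC k])
  set ρ : Fin N → ℝ := fun k => κ k / (κ k - 1)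
  have hρ (k : Fin N) : 1 < ρ k := (one_lt_div (sub_pos.2 (hκ k))).2 (sub_lt_self _ one_pos)
  have hπ (m : ℕ) : 0 < prodBelow ρ m :=
    prod_pos fun k _ => one_pos.trans (hρ k)
  have hμ : 1 < prodBelow ρ N := by
    rw [prodBelow_self]
    simpa using prod_lt_prod_of_nonempty (fun _ _ => one_pos) (fun k _ => hρ k) univ_nonempty
  refine ⟨prodBelow ρ N, hμ, fun j => prodBelow ρ j / (κ j - 1),
    fun j => div_pos (hπ j) (sub_pos.2 (hκ j)), fun i => ?_⟩
  have hXi : X i = P + sumBelow C i + κ i • C i := hXeq i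
  set h : ℕ → ℝ := fun m => prodBelow ρ m * (X i - (P + sumBelow C m)).det
  have hstep (j : Fin N) : prodBelow ρ j / (κ j - 1) * (X i - X j).det = h (j + 1) - h j := by
    rw [hXeq j]
    exact prodBelow_div_mul_det_sub_eq P (X i) C κ j (hdetC j) (hκ j).ne'
  have hi : h i = 0 := by
    simp only [h, hXi, add_sub_cancel_left, Matrix.det_smul, hdetC, mul_zero]
  have hi1 : h (i + 1) = 0 := by
    have : X i - (P + sumBelow C (i + 1)) = (κ i - 1) • C i := by
      rw [hXi, sumBelow_succ]
      module
    simp only [h, this, Matrix.det_smul, hdetC, mul_zero]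
  have hwrap : h N = prodBelow ρ N * h 0 := by
    simp only [h, sumBelow_self, hCsum, sumBelow_zero, prodBelow_zero]
    ring
  refine (sum_congr rfl fun j _ => ?_).trans
    (Fin.sum_ite_sub_eq_zero h _ i (by rw [hi, hi1, mul_zero]) hwrap)
  split_ifs
  · linear_combination hstep j
  · linear_combination prodBelow ρ N * hstep j
  · ring
end
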